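/- arXiv:2511.23202 — 4 statements merged into one kernel-verified Lean document; each statement's English description precedes it below -/
import Mathlib

section
/- Let q be a prime power, m a positive integer, and f(x) = Σ_{i=0}^{k} f_i x^{q^i} a linearized q-polynomial over F_{q^m} with f_i not all zero. If the kernel of the induced endomorphism of F_{q^m} has F_q-dimension exactly k, then f_k ≠ 0 and N_{q^m/q}(f_0) = (−1)^{mk} N_{q^m/q}(f_k). -/
open Finset Polynomial



-- geometric sum facts
lemma aux_geom_mul (q : ℕ) (hq : 1 ≤ q) (m : ℕ) :
    (q - 1) * ∑ i ∈ Finset.range m, q ^ i = q ^ m - 1 := by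
  induction m with
  | zero => simp
  | succ m ih =>
    rw [Finset.sum_range_succ, Nat.mul_add, ih]
    have h1 : 1 ≤ q ^ m := Nat.one_le_pow _ _ hq
    have h2 : q ^ m ≤ q ^ (m+1) := Nat.pow_le_pow_right hq (by omega)
    have h3 : (q - 1) * q ^ m = q ^ (m+1) - q ^ m := by
      rw [pow_succ, Nat.sub_mul, one_mul, mul_comm]
    omega

lemma aux_s_eq (q m : ℕ) (hq : 2 ≤ q) :
    (q ^ m - 1) / (q - 1) = ∑ i ∈ Finset.range m, q ^ i := by
  rw [← aux_geom_mul q (by omega) m, Nat.mul_div_cancel_left _ (by omega)]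

lemma aux_s_mul (q m : ℕ) (hq : 2 ≤ q) :
    (q - 1) * ((q ^ m - 1) / (q - 1)) = q ^ m - 1 := by
  rw [aux_s_eq q m hq, aux_geom_mul q (by omega) m]

lemma aux_s_parity (q m : ℕ) (hq : Odd q) (hq2 : 2 ≤ q) :
    (q ^ m - 1) / (q - 1) % 2 = m % 2 := by
  rw [aux_s_eq q m hq2, Finset.sum_nat_mod]
  have : ∀ i ∈ Finset.range m, q ^ i % 2 = 1 % 2 := by
    intro i _
    rw [Nat.odd_iff.mp (hq.pow)]
  rw [Finset.sum_congr rfl this, ← Finset.sum_nat_mod, Finset.sum_const, card_range, smul_eq_mul,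
    mul_one]


lemma aux_char (q m r e : ℕ) (hr : Nat.Prime r) (he : 0 < e) (hqe : r ^ e = q)
    (hm : 0 < m) (K : Type) [Field K] [Fintype K] (h2 : Fintype.card K = q ^ m) :
    CharP K r := by
  set p := ringChar K with hp_def
  haveI : CharP K p := ringChar.charP K
  obtain ⟨n, hp, hcard⟩ := FiniteField.card K p
  have hpow : r ^ (e * m) = p ^ (n : ℕ) := by rw [pow_mul, hqe, ← h2, hcard]
  have hdvd : r ∣ p ^ (n : ℕ) := by
    rw [← hpow]
    exact dvd_pow_self r (by positivity)
  have hrp : r = p := (Nat.prime_dvd_prime_iff_eq hr hp).mp (hr.dvd_of_dvd_pow hdvd)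
  rw [hrp]; infer_instance

lemma aux_neg_one_pow (q m : ℕ) (hq : IsPrimePow q) (hm : 0 < m)
    (K : Type) [Field K] [Fintype K] (h2 : Fintype.card K = q ^ m) (t : ℕ) :
    (-1 : K) ^ (q ^ t * ((q ^ m - 1) / (q - 1))) = (-1 : K) ^ m := by
  obtain ⟨r, e, hr, he, hqe⟩ := hq
  replace hr : Nat.Prime r := Nat.prime_iff.mpr hr
  have hq2 : 2 ≤ q := by
    calc 2 ≤ r := hr.two_le
    _ ≤ r ^ e := Nat.le_self_pow (by omega) r
    _ = q := hqe
  rcases Nat.even_or_odd q with hqe2 | hqo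
  · have h2r : r = 2 := by
      have : (2:ℕ) ∣ r ^ e := by rw [hqe]; exact hqe2.two_dvd
      have := (Nat.prime_two.dvd_of_dvd_pow this)
      exact ((Nat.prime_dvd_prime_iff_eq Nat.prime_two hr).mp this).symm
    haveI : CharP K 2 := by
      have := aux_char q m r e hr he hqe hm K h2
      rwa [h2r] at this
    have : (-1 : K) = 1 := CharTwo.neg_eq 1
    rw [this, one_pow, one_pow]
  · have hs : (q ^ m - 1) / (q - 1) % 2 = m % 2 := aux_s_parity q m hqo hq2
    have hexp : (q ^ t * ((q ^ m - 1) / (q - 1))) % 2 = m % 2 := by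
      rw [Nat.mul_mod, Nat.odd_iff.mp (hqo.pow), hs, one_mul, Nat.mod_mod_of_dvd _ (dvd_refl 2)]
    rcases Nat.even_or_odd m with h | h
    · rw [h.neg_one_pow, (Nat.even_iff.mpr (by rw [hexp]; exact Nat.even_iff.mp h)).neg_one_pow]
    · rw [h.neg_one_pow, (Nat.odd_iff.mpr (by rw [hexp]; exact Nat.odd_iff.mp h)).neg_one_pow]


lemma aux_wilson (Fq : Type) [Field Fq] [Fintype Fq] [DecidableEq Fq] :
    ∏ a ∈ Finset.univ.erase (0 : Fq), a = -1 := by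
  classical
  have h1 : ∏ a ∈ Finset.univ.erase (0 : Fq), a = ∏ x : {a : Fq // a ≠ 0}, (x : Fq) := by
    apply Finset.prod_subtype
    intro x; simp
  have h2 : ∏ x : {a : Fq // a ≠ 0}, (x : Fq) = ∏ x : Fqˣ, (x : Fq) := by
    rw [← Equiv.prod_comp unitsEquivNeZero (fun (x : {a : Fq // a ≠ 0}) => (x : Fq))]
    simp
  have h3 : ∏ x : Fqˣ, (x : Fq) = ((∏ x : Fqˣ, x : Fqˣ) : Fq) := by
    exact (map_prod (Units.coeHom Fq) _ _).symm
  rw [h1, h2, h3, FiniteField.prod_univ_units_id_eq_neg_one]; simp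



lemma key_prod (q m : ℕ) (hq : IsPrimePow q) (hm : 0 < m)
    (Fq K : Type) [Field Fq] [Field K] [Fintype Fq] [Fintype K] [Algebra Fq K]
    [DecidableEq Fq]
    (h1 : Fintype.card Fq = q) (h2 : Fintype.card K = q ^ m) :
    ∀ (j : ℕ) (w : Fin j → K), LinearIndependent Fq w →
    (∏ c ∈ Finset.univ.erase (0 : Fin j → Fq), (-(∑ i, c i • w i))) ^ ((q ^ m - 1) / (q - 1))
      = (-1 : K) ^ (m * j) := by
  classical
  have hq2 : 2 ≤ q := hq.two_le
  intro j
  induction j with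
  | zero =>
    intro w _
    have he : (Finset.univ.erase (0 : Fin 0 → Fq)) = ∅ := by
      ext c
      simp [Subsingleton.elim c 0]
    rw [he]
    simp
  | succ j ih =>
    intro w hw
    set s := (q ^ m - 1) / (q - 1) with hs_def
    set w' : Fin j → K := fun i => w i.succ with hw'_def
    have hw'li : LinearIndependent Fq w' := hw.comp Fin.succ (Fin.succ_injective j)
    set b : K := w 0 with hb_def
    set vs : (Fin j → Fq) → K := fun c => ∑ i, c i • w' i with hvs_def
    have hsum : ∀ (a : Fq) (c' : Fin j → Fq),
        (∑ i : Fin (j+1), (Fin.cons a c' : Fin (j+1) → Fq) i • w i) = a • b + vs c' := by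
      intro a c'
      rw [Fin.sum_univ_succ]
      simp [vs, w', b]
    have hcons0 : ∀ (a : Fq) (c' : Fin j → Fq),
        (Fin.cons a c' : Fin (j+1) → Fq) = 0 ↔ a = 0 ∧ c' = 0 := by
      intro a c'
      constructor
      · intro h
        refine ⟨by simpa using congrFun h 0, funext fun i => by simpa using congrFun h i.succ⟩
      · rintro ⟨rfl, rfl⟩
        funext i
        refine Fin.cases ?_ (fun i => ?_) i <;> simp
    set G : (Fin (j+1) → Fq) → K := fun c => if c = 0 then 1 else -(∑ i, c i • w i) with hG_def
    have hA : (∏ c ∈ Finset.univ.erase (0 : Fin (j+1) → Fq), (-(∑ i, c i • w i)))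
        = ∏ c, G c := by
      rw [← Finset.mul_prod_erase Finset.univ G (Finset.mem_univ 0), hG_def]
      simp only [eq_self_iff_true, if_true, one_mul]
      exact Finset.prod_congr rfl fun c hc => by
        rw [if_neg (Finset.ne_of_mem_erase hc)]
    have hB : ∏ c, G c = ∏ a : Fq, ∏ c' : Fin j → Fq, G (Fin.cons a c') := by
      rw [← Equiv.prod_comp (Fin.consEquiv (fun _ : Fin (j+1) => Fq)) G,
        Fintype.prod_prod_type]
      rfl
    set L : K := ∏ c' : Fin j → Fq, (b - vs c') with hL_def
    have hL0 : L ≠ 0 := by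
      rw [hL_def, Finset.prod_ne_zero_iff]
      intro c' _
      rw [sub_ne_zero]
      intro hb_eq
      have hrel : ∑ i : Fin (j+1), (Fin.cons (-1 : Fq) c' : Fin (j+1) → Fq) i • w i = 0 := by
        rw [hsum, ← hb_eq]
        simp
      have := Fintype.linearIndependent_iff.mp hw _ hrel 0
      simp at this
    have hH0 : (∏ c' : Fin j → Fq, G (Fin.cons 0 c'))
        = ∏ c' ∈ Finset.univ.erase (0 : Fin j → Fq), (-(vs c')) := by
      rw [← Finset.mul_prod_erase Finset.univ
        (fun c' : Fin j → Fq => G (Fin.cons 0 c')) (Finset.mem_univ 0)]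
      have e1 : G (Fin.cons (0:Fq) (0 : Fin j → Fq)) = 1 := by
        rw [hG_def]
        simp only [if_pos ((hcons0 0 0).mpr ⟨rfl, rfl⟩)]
      rw [e1, one_mul]
      refine Finset.prod_congr rfl fun c' hc' => ?_
      have hne : (Fin.cons (0:Fq) c' : Fin (j+1) → Fq) ≠ 0 := by
        rw [Ne, hcons0]
        exact fun h => (Finset.ne_of_mem_erase hc') h.2
      rw [hG_def]
      simp only [if_neg hne]
      rw [hsum]
      simp
    have hHa : ∀ a : Fq, a ≠ 0 → (∏ c' : Fin j → Fq, G (Fin.cons a c'))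
        = (algebraMap Fq K (-a)) ^ q ^ j * L := by
      intro a ha
      have hne : ∀ c' : Fin j → Fq, (Fin.cons a c' : Fin (j+1) → Fq) ≠ 0 := by
        intro c'
        rw [Ne, hcons0]
        exact fun h => ha h.1
      have e1 : (∏ c' : Fin j → Fq, G (Fin.cons a c'))
          = ∏ c' : Fin j → Fq, (-(a • b + vs c')) := by
        refine Finset.prod_congr rfl fun c' _ => ?_
        rw [hG_def]
        simp only [if_neg (hne c')]
        rw [hsum]
      rw [e1]
      set u : Fqˣ := Units.mk0 (-a) (neg_ne_zero.mpr ha) with hu_def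
      have e2 : ∏ c' : Fin j → Fq, (-(a • b + vs c'))
          = ∏ c' : Fin j → Fq, (-(a • b + vs (u • c'))) :=
        (Equiv.prod_comp (MulAction.toPerm u) (fun c' => -(a • b + vs c'))).symm
      have hvs_smul : ∀ c' : Fin j → Fq, vs (u • c') = (-a) • vs c' := by
        intro c'
        rw [hvs_def]
        simp only []
        rw [Finset.smul_sum]
        refine Finset.sum_congr rfl fun i _ => ?_
        have h : (u • c') i = (-a) * c' i := by
          simp [hu_def, Units.smul_def]
        rw [h, mul_smul]
      have e3 : ∀ c' : Fin j → Fq, (-(a • b + vs (u • c')))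
          = algebraMap Fq K (-a) * (b - vs c') := by
        intro c'
        rw [hvs_smul c', ← Algebra.smul_def]
        module
      rw [e2, Finset.prod_congr rfl fun c' _ => e3 c', Finset.prod_mul_distrib,
        Finset.prod_const, Finset.card_univ, Fintype.card_fun, Fintype.card_fin, h1, hL_def]
    have hprodneg : ∏ a ∈ Finset.univ.erase (0:Fq), (-a) = (-1:Fq) ^ q := by
      calc ∏ a ∈ Finset.univ.erase (0:Fq), (-a)
          = ∏ a ∈ Finset.univ.erase (0:Fq), ((-1) * a) := by
            refine Finset.prod_congr rfl fun a _ => by ring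
        _ = (-1:Fq) ^ (q-1) * ∏ a ∈ Finset.univ.erase (0:Fq), a := by
            rw [Finset.prod_mul_distrib, Finset.prod_const,
              Finset.card_erase_of_mem (Finset.mem_univ 0), Finset.card_univ, h1]
        _ = (-1:Fq) ^ (q-1) * (-1) := by rw [aux_wilson]
        _ = (-1:Fq) ^ q := by
            have hq1 : q - 1 + 1 = q := by omega
            rw [← pow_succ, hq1]
    have hsplit : ∏ a : Fq, (∏ c' : Fin j → Fq, G (Fin.cons a c'))
        = (∏ c' ∈ Finset.univ.erase (0 : Fin j → Fq), (-(vs c')))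
          * ((algebraMap Fq K ((-1:Fq) ^ q)) ^ q ^ j * L ^ (q-1)) := by
      rw [← Finset.mul_prod_erase Finset.univ _ (Finset.mem_univ (0:Fq)), hH0]
      congr 1
      calc ∏ a ∈ Finset.univ.erase (0:Fq), ∏ c' : Fin j → Fq, G (Fin.cons a c')
          = ∏ a ∈ Finset.univ.erase (0:Fq), ((algebraMap Fq K (-a)) ^ q ^ j * L) :=
            Finset.prod_congr rfl fun a ha => hHa a (Finset.mem_erase.mp ha).1
        _ = (∏ a ∈ Finset.univ.erase (0:Fq), (algebraMap Fq K (-a)) ^ q ^ j) * L ^ (q-1) := by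
            rw [Finset.prod_mul_distrib, Finset.prod_const,
              Finset.card_erase_of_mem (Finset.mem_univ 0), Finset.card_univ, h1]
        _ = (algebraMap Fq K (∏ a ∈ Finset.univ.erase (0:Fq), (-a))) ^ q ^ j * L ^ (q-1) := by
            rw [Finset.prod_pow, ← map_prod]
        _ = (algebraMap Fq K ((-1:Fq) ^ q)) ^ q ^ j * L ^ (q-1) := by rw [hprodneg]
    rw [hA, hB, hsplit]
    have hmap : (algebraMap Fq K ((-1:Fq) ^ q)) = (-1:K) ^ q := by
      rw [map_pow, map_neg, map_one]
    rw [mul_pow, mul_pow, ih w' hw'li, hmap]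
    have e1 : (((-1:K) ^ q) ^ q ^ j) ^ s = (-1:K) ^ (q ^ (j+1) * s) := by
      rw [← pow_mul, ← pow_mul, ← mul_assoc, ← pow_succ']
    have e3 : (L ^ (q-1)) ^ s = 1 := by
      rw [← pow_mul, hs_def, aux_s_mul q m hq2, ← h2]
      exact FiniteField.pow_card_sub_one_eq_one L hL0
    rw [e1, e3, hs_def, aux_neg_one_pow q m hq hm K h2 (j+1), mul_one, ← pow_add, Nat.mul_succ]



theorem stmt_6 (q m k : ℕ) (hq : IsPrimePow q) (hm : 0 < m)
    (Fq K : Type) [Field Fq] [Field K] [Fintype Fq] [Fintype K] [Algebra Fq K]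
    (h1 : Fintype.card Fq = q) (h2 : Fintype.card K = q ^ m)
    (f : Fin (k + 1) → K) (hf : f ≠ 0)
    (w : Fin k → K) (hw : LinearIndependent Fq w)
    (hwker : ∀ j, ∑ i : Fin (k + 1), f i * w j ^ q ^ (i : ℕ) = 0)
    (hmax : ∀ v : Fin (k + 1) → K,
      (∀ j, ∑ i : Fin (k + 1), f i * v j ^ q ^ (i : ℕ) = 0) → ¬ LinearIndependent Fq v) :
    f (Fin.last k) ≠ 0 ∧
      f 0 ^ ((q ^ m - 1) / (q - 1)) =
        (-1 : K) ^ (m * k) * f (Fin.last k) ^ ((q ^ m - 1) / (q - 1)) := by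
  classical
  have hq2 : 2 ≤ q := hq.two_le
  obtain ⟨r, e, hr, he, hqe⟩ := hq
  replace hr : Nat.Prime r := Nat.prime_iff.mpr hr
  haveI : CharP K r := aux_char q m r e hr he hqe hm K h2
  haveI : ExpChar K r := ExpChar.prime hr
  -- the linear combination map
  set v : (Fin k → Fq) → K := fun c => ∑ i, c i • w i with hv_def
  have hv_inj : Function.Injective v := by
    intro c d hcd
    have hzero : ∑ i, (c i - d i) • w i = 0 := by
      simp only [sub_smul, Finset.sum_sub_distrib]
      rw [hv_def] at hcd
      simp only [] at hcd
      rw [hcd, sub_self]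
    funext i
    have := Fintype.linearIndependent_iff.mp hw _ hzero i
    exact sub_eq_zero.mp this
  -- Frobenius facts
  have hpowadd : ∀ (i : ℕ) (g : Fin k → K), (∑ j, g j) ^ q ^ i = ∑ j, g j ^ q ^ i := by
    intro i g
    have hqi : q ^ i = r ^ (e * i) := by rw [pow_mul, hqe]
    rw [hqi]
    exact sum_pow_char_pow r (e*i) Finset.univ g
  have hcpow : ∀ (a : Fq) (i : ℕ), a ^ q ^ i = a := by
    intro a i
    rw [← h1]
    exact FiniteField.pow_card_pow i a
  -- the polynomial
  set p : Polynomial K := ∑ i : Fin (k+1), Polynomial.C (f i) * Polynomial.X ^ (q ^ (i:ℕ))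
    with hp_def
  have hcoeff : ∀ i0 : Fin (k+1), p.coeff (q ^ (i0:ℕ)) = f i0 := by
    intro i0
    rw [hp_def, Polynomial.finset_sum_coeff]
    rw [Finset.sum_eq_single i0]
    · simp [Polynomial.coeff_C_mul, Polynomial.coeff_X_pow]
    · intro i _ hne
      rw [Polynomial.coeff_C_mul, Polynomial.coeff_X_pow, if_neg, mul_zero]
      intro h
      exact hne (Fin.ext (Nat.pow_right_injective hq2 h.symm))
    · simp
  obtain ⟨i0, hi0⟩ : ∃ i, f i ≠ 0 := Function.ne_iff.mp hf
  have hp_ne : p ≠ 0 := fun h => hi0 (by rw [← hcoeff i0, h, Polynomial.coeff_zero])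
  have heval : ∀ c : Fin k → Fq, p.eval (v c) = 0 := by
    intro c
    rw [hp_def, Polynomial.eval_finset_sum]
    simp only [Polynomial.eval_mul, Polynomial.eval_pow, Polynomial.eval_C, Polynomial.eval_X]
    have hvc : ∀ i : Fin (k+1), (v c) ^ q ^ (i:ℕ) = ∑ j, c j • w j ^ q ^ (i:ℕ) := by
      intro i
      rw [hv_def]
      simp only []
      rw [hpowadd]
      refine Finset.sum_congr rfl fun j _ => ?_
      rw [_root_.smul_pow, hcpow]
    calc ∑ i : Fin (k+1), f i * (v c) ^ q ^ (i:ℕ)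
        = ∑ i : Fin (k+1), ∑ j, c j • (f i * w j ^ q ^ (i:ℕ)) := by
          refine Finset.sum_congr rfl fun i _ => ?_
          rw [hvc i, Finset.mul_sum]
          exact Finset.sum_congr rfl fun j _ => (mul_smul_comm _ _ _)
      _ = ∑ j, c j • (∑ i : Fin (k+1), f i * w j ^ q ^ (i:ℕ)) := by
          rw [Finset.sum_comm]
          exact Finset.sum_congr rfl fun j _ => (Finset.smul_sum).symm
      _ = 0 := by
          refine Finset.sum_eq_zero fun j _ => ?_
          rw [hwker j, smul_zero]
  have hcard : Fintype.card (Fin k → Fq) = q ^ k := by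
    rw [Fintype.card_fun, Fintype.card_fin, h1]
  have hdeg_le : p.natDegree ≤ q ^ k := by
    rw [hp_def]
    apply Polynomial.natDegree_sum_le_of_forall_le
    intro i _
    refine le_trans (Polynomial.natDegree_C_mul_le _ _) ?_
    rw [Polynomial.natDegree_X_pow]
    exact Nat.pow_le_pow_right (by omega) i.is_le
  have hdeg : p.natDegree = q ^ k := by
    by_contra hne
    exact hp_ne (Polynomial.eq_zero_of_natDegree_lt_card_of_eval_eq_zero p hv_inj heval
      (by rw [hcard]; exact lt_of_le_of_ne hdeg_le hne))
  have hcoeff_last : p.coeff (q ^ k) = f (Fin.last k) := by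
    have := hcoeff (Fin.last k)
    rwa [Fin.val_last] at this
  have hlast : f (Fin.last k) ≠ 0 := by
    rw [← hcoeff_last, ← hdeg]
    exact Polynomial.leadingCoeff_ne_zero.mpr hp_ne
  -- the product polynomial
  set Q : Polynomial K := ∏ c : Fin k → Fq, (Polynomial.X - Polynomial.C (v c)) with hQ_def
  have hQmonic : Q.Monic :=
    Polynomial.monic_prod_of_monic _ _ fun c _ => Polynomial.monic_X_sub_C _
  have hQdeg : Q.natDegree = q ^ k := by
    rw [hQ_def, Polynomial.natDegree_prod _ _ (fun c _ => Polynomial.X_sub_C_ne_zero _)]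
    simp [Polynomial.natDegree_X_sub_C, hcard]
  have hpQ : p = Polynomial.C (f (Fin.last k)) * Q := by
    have hCQ_ne : Polynomial.C (f (Fin.last k)) * Q ≠ 0 :=
      mul_ne_zero (by simpa using hlast) hQmonic.ne_zero
    have hdegeq : p.degree = (Polynomial.C (f (Fin.last k)) * Q).degree := by
      rw [Polynomial.degree_C_mul (by exact hlast), Polynomial.degree_eq_natDegree hp_ne,
        Polynomial.degree_eq_natDegree hQmonic.ne_zero, hdeg, hQdeg]
    have hlc : p.leadingCoeff = (Polynomial.C (f (Fin.last k)) * Q).leadingCoeff := by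
      rw [Polynomial.leadingCoeff_mul, Polynomial.leadingCoeff_C, hQmonic.leadingCoeff, mul_one]
      rw [Polynomial.leadingCoeff, hdeg, hcoeff_last]
    by_contra hne
    have hsub_ne : p - Polynomial.C (f (Fin.last k)) * Q ≠ 0 := sub_ne_zero.mpr hne
    have hdlt : (p - Polynomial.C (f (Fin.last k)) * Q).degree < p.degree :=
      Polynomial.degree_sub_lt hdegeq hp_ne hlc
    have hpdeg' : p.degree = ((q ^ k : ℕ) : WithBot ℕ) := by
      rw [Polynomial.degree_eq_natDegree hp_ne, hdeg]
    have hndlt : (p - Polynomial.C (f (Fin.last k)) * Q).natDegree < q ^ k := by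
      rw [Polynomial.natDegree_lt_iff_degree_lt hsub_ne, ← hpdeg']
      exact hdlt
    have heval2 : ∀ c : Fin k → Fq, (p - Polynomial.C (f (Fin.last k)) * Q).eval (v c) = 0 := by
      intro c
      rw [Polynomial.eval_sub, heval c, Polynomial.eval_mul, Polynomial.eval_C, hQ_def,
        Polynomial.eval_prod]
      rw [Finset.prod_eq_zero (Finset.mem_univ c) (by simp)]
      ring
    exact hsub_ne (Polynomial.eq_zero_of_natDegree_lt_card_of_eval_eq_zero _ hv_inj heval2
      (by rw [hcard]; exact hndlt))
  -- extract coefficient 1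
  have hv0 : v 0 = 0 := by
    rw [hv_def]; simp
  have hQsplit : Q = Polynomial.X *
      ∏ c ∈ Finset.univ.erase (0 : Fin k → Fq), (Polynomial.X - Polynomial.C (v c)) := by
    rw [hQ_def, ← Finset.mul_prod_erase Finset.univ _ (Finset.mem_univ 0), hv0, map_zero,
      sub_zero]
  have hcoeff1 : p.coeff 1 = f 0 := by
    have := hcoeff 0
    rwa [show ((0 : Fin (k+1)) : ℕ) = 0 from rfl, pow_zero] at this
  have hf0 : f 0 = f (Fin.last k) *
      ∏ c ∈ Finset.univ.erase (0 : Fin k → Fq), (-(∑ i, c i • w i)) := by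
    rw [← hcoeff1, hpQ, Polynomial.coeff_C_mul, hQsplit, Polynomial.coeff_X_mul,
      Polynomial.coeff_zero_eq_eval_zero, Polynomial.eval_prod]
    congr 1
    refine Finset.prod_congr rfl fun c _ => ?_
    rw [Polynomial.eval_sub, Polynomial.eval_X, Polynomial.eval_C, zero_sub, hv_def]
  refine ⟨hlast, ?_⟩
  rw [hf0, mul_pow,
    key_prod q m ⟨r, e, Nat.prime_iff.mp hr, he, hqe⟩ hm Fq K h1 h2 k w hw, mul_comm]
end

section
/- Let q be an odd prime power and n, k positive integers with 1 ≤ k ≤ 2n−1. Let γ ∈ F_{q^{2n}} with N_{q^{2n}/q}(γ) a non-square in F_q. Then every nonzero polynomial f in D_k(γ) = { a x + Σ_{i=1}^{k-1} f_i x^{q^i} + γ b x^{q^k} : f_i ∈ F_{q^{2n}}, a,b ∈ F_{q^n} } induces an F_q-linear endomorphism of F_{q^{2n}} whose kernel has F_q-dimension at most k−1; equivalently, rank(f) ≥ 2n−k+1. -/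
open Finset Polynomial

namespace TZAux

/-- Geometric sum identity in ℕ. -/
lemma geom_mul (q : ℕ) (hq : 2 ≤ q) : ∀ m : ℕ, (q - 1) * ∑ i ∈ Finset.range m, q ^ i = q ^ m - 1
  | 0 => by simp
  | (m+1) => by
    rw [Finset.sum_range_succ, Nat.mul_add, geom_mul q hq m]
    have h1 : 1 ≤ q ^ m := Nat.one_le_pow _ _ (by omega)
    have h3 : q ^ (m+1) = q * q ^ m := by rw [pow_succ, mul_comm]
    have h4 : (q - 1) * q ^ m = q * q ^ m - q ^ m := by rw [Nat.sub_mul, one_mul]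
    have h5 : q ^ m ≤ q * q ^ m := Nat.le_mul_of_pos_left _ (by omega)
    omega

lemma pow_pow_fix {R : Type} [Monoid R] (q : ℕ) (t : R) (ht : t ^ q = t) :
    ∀ i : ℕ, t ^ q ^ i = t
  | 0 => pow_one t
  | (i+1) => by rw [pow_succ, pow_mul, pow_pow_fix q t ht i, ht]

variable {Fq K : Type} [Field Fq] [Field K] [Fintype Fq] [Algebra Fq K]

/-- Every fixed point of `x ↦ x^q` in `K` comes from `Fq`. -/
lemma fixed_pt (q : ℕ) (hq : 2 ≤ q) (h0 : Fintype.card Fq = q)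
    (x : K) (hx : x ^ q = x) : ∃ s : Fq, algebraMap Fq K s = x := by
  classical
  set P : K[X] := X ^ q - X with hP
  have hdX : (X : K[X]).natDegree < ((X : K[X]) ^ q).natDegree := by
    simp only [natDegree_X_pow, natDegree_X]; omega
  have hdeg : P.natDegree = q := by
    rw [hP, natDegree_sub_eq_left_of_natDegree_lt hdX, natDegree_X_pow]
  have hP0 : P ≠ 0 := by
    intro h; rw [h, natDegree_zero] at hdeg; omega
  have hroot : ∀ s : Fq, P.IsRoot (algebraMap Fq K s) := by
    intro s
    have hs : s ^ q = s := by rw [← h0]; exact FiniteField.pow_card s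
    simp [hP, IsRoot, ← map_pow, hs]
  set S : Finset K := Finset.univ.image (algebraMap Fq K) with hS
  have hsub : S ⊆ P.roots.toFinset := by
    intro y hy
    simp only [hS, Finset.mem_image] at hy
    obtain ⟨s, _, rfl⟩ := hy
    rw [Multiset.mem_toFinset, mem_roots hP0]
    exact hroot s
  have hcardS : S.card = q := by
    rw [hS, Finset.card_image_of_injective _ (algebraMap Fq K).injective,
      Finset.card_univ, h0]
  have hcardR : P.roots.toFinset.card ≤ q := by
    refine le_trans (Multiset.toFinset_card_le _) ?_
    have := P.card_roots'
    omega
  have heq : S = P.roots.toFinset := Finset.eq_of_subset_of_card_le hsub (by omega)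
  have hxm : x ∈ P.roots.toFinset := by
    rw [Multiset.mem_toFinset, mem_roots hP0]
    simp [hP, IsRoot, hx]
  rw [← heq] at hxm
  simp only [hS, Finset.mem_image] at hxm
  obtain ⟨s, _, hs⟩ := hxm
  exact ⟨s, hs⟩

/-- Root-counting bound: a nonzero q-polynomial of q-degree ≤ t cannot vanish on the span of
`r` linearly independent vectors unless `r ≤ t`. -/
lemma rank_bound (q : ℕ) (hq : 2 ≤ q) [Fintype K] (h0q : Fintype.card Fq = q)
    (t r : ℕ) (d : ℕ → K) (i₀ : ℕ) (hi₀ : i₀ ≤ t) (hd : d i₀ ≠ 0)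
    (v : Fin r → K) (hli : LinearIndependent Fq v)
    (hroot : ∀ x ∈ Submodule.span Fq (Set.range v),
      ∑ i ∈ Finset.range (t+1), d i * x ^ q ^ i = 0) :
    r ≤ t := by
  classical
  set P : K[X] := ∑ i ∈ Finset.range (t+1), Polynomial.C (d i) * X ^ (q ^ i) with hPdef
  have hcoeff : P.coeff (q ^ i₀) = d i₀ := by
    rw [hPdef, finset_sum_coeff]
    rw [Finset.sum_eq_single i₀]
    · simp [coeff_C_mul, coeff_X_pow]
    · intro i hi hne
      have hne' : q ^ i₀ ≠ q ^ i := fun h => hne ((Nat.pow_right_injective hq) h).symm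
      simp [coeff_C_mul, coeff_X_pow, hne']
    · intro h; exact absurd (Finset.mem_range.mpr (by omega)) h
  have hP0 : P ≠ 0 := fun h => hd (by rw [← hcoeff, h, coeff_zero])
  have hdeg : P.natDegree ≤ q ^ t := by
    refine natDegree_sum_le_of_forall_le _ _ fun i hi => ?_
    refine le_trans (natDegree_C_mul_le _ _) ?_
    rw [natDegree_X_pow]
    exact Nat.pow_le_pow_right (by omega) (by
      have := Finset.mem_range.mp hi; omega)
  have hspanroot : ∀ x ∈ Submodule.span Fq (Set.range v), P.IsRoot x := by
    intro x hx
    have h := hroot x hx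
    simpa [hPdef, IsRoot, eval_finset_sum] using h
  set Sp : Set K := (Submodule.span Fq (Set.range v) : Set K) with hSp
  set S : Finset K := Sp.toFinset with hS
  have hsub : S ⊆ P.roots.toFinset := by
    intro y hy
    rw [hS, Set.mem_toFinset] at hy
    rw [Multiset.mem_toFinset, mem_roots hP0]
    exact hspanroot y hy
  have hScard : S.card = q ^ r := by
    have hfr : Module.finrank Fq (Submodule.span Fq (Set.range v)) = r := by
      rw [finrank_span_eq_card hli, Fintype.card_fin]
    have h1 : Fintype.card (Submodule.span Fq (Set.range v)) = q ^ r := by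
      rw [Module.card_eq_pow_finrank (K := Fq) (V := Submodule.span Fq (Set.range v)), h0q, hfr]
    rw [hS, Set.toFinset_card]
    convert h1 using 2 <;> try exact Subsingleton.elim _ _
    rfl
  have hbound : q ^ r ≤ q ^ t := by
    calc q ^ r = S.card := hScard.symm
      _ ≤ P.roots.toFinset.card := Finset.card_le_card hsub
      _ ≤ Multiset.card P.roots := Multiset.toFinset_card_le _
      _ ≤ P.natDegree := P.card_roots'
      _ ≤ q ^ t := hdeg
  exact (Nat.pow_le_pow_iff_right hq).mp hbound


/-- Gow–Quinlan style norm condition: if a q-polynomial of q-degree k with nonzero top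
coefficient vanishes on the span of k independent vectors, then the e-th powers of the
bottom and top coefficients agree. -/
lemma gq (q : ℕ) (hq : 2 ≤ q) [Fintype K] (h0 : Fintype.card Fq = q)
    (hfrob : ∀ (x y : K) (i : ℕ), (x - y) ^ q ^ i = x ^ q ^ i - y ^ q ^ i)
    (e : ℕ) (he : e * (q - 1) = Fintype.card K - 1) (heven : Even e) :
    ∀ (k : ℕ) (a : ℕ → K), a k ≠ 0 →
      ∀ v : Fin k → K, LinearIndependent Fq v →
      (∀ x ∈ Submodule.span Fq (Set.range v),
        ∑ i ∈ Finset.range (k+1), a i * x ^ q ^ i = 0) →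
      a 0 ^ e = a k ^ e := by
  have hqi0 : ∀ i : ℕ, q ^ i ≠ 0 := fun i => pow_ne_zero i (by omega)
  have hneg : ∀ (y : K) (i : ℕ), (-y) ^ q ^ i = -(y ^ q ^ i) := by
    intro y i
    have h := hfrob 0 y i
    simpa [zero_pow (hqi0 i)] using h
  have hadd : ∀ (x y : K) (i : ℕ), (x + y) ^ q ^ i = x ^ q ^ i + y ^ q ^ i := by
    intro x y i
    have h := hfrob x (-y) i
    rw [sub_neg_eq_add, hneg] at h
    rw [h, sub_neg_eq_add]
  have haddq : ∀ x y : K, (x + y) ^ q = x ^ q + y ^ q := by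
    intro x y; simpa using hadd x y 1
  have hsq : ∀ s : Fq, (algebraMap Fq K s) ^ q = algebraMap Fq K s := by
    intro s
    rw [← map_pow]
    congr 1
    rw [← h0]; exact FiniteField.pow_card s
  intro k
  induction k with
  | zero => intro a _ _ _ _; rfl
  | succ k IH =>
    intro a hak v hli hvan
    classical
    set u := v 0 with hu_def
    have hu : u ≠ 0 := hli.ne_zero 0
    have hmem0 : u ∈ Submodule.span Fq (Set.range v) := Submodule.subset_span ⟨0, rfl⟩
    have hupow : u ^ q = u ^ (q-1) * u := by
      rw [← pow_succ]; congr 1; omega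
    -- the linear map L x = x^q - u^{q-1} x
    set L : K →ₗ[Fq] K :=
      { toFun := fun x => x ^ q - u ^ (q - 1) * x
        map_add' := by
          intro x y
          show (x+y) ^ q - u ^ (q-1) * (x+y) = (x ^ q - u ^ (q-1) * x) + (y ^ q - u ^ (q-1) * y)
          rw [haddq]; ring
        map_smul' := by
          intro s x
          show (s • x) ^ q - u ^ (q-1) * (s • x) = s • (x ^ q - u ^ (q-1) * x)
          simp only [Algebra.smul_def, mul_pow, hsq s]
          ring } with hLdef
    have hLapp : ∀ x : K, L x = x ^ q - u ^ (q - 1) * x := fun x => rfl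
    -- the quotient coefficients g
    set G : ℕ → K := fun t =>
      Nat.rec (a (k+1)) (fun t ih => a (k - t) + ih * u ^ ((q-1) * q ^ (k - t))) t with hGdef
    have hGsucc : ∀ t : ℕ, G (t+1) = a (k - t) + G t * u ^ ((q-1) * q ^ (k - t)) := fun t => rfl
    set g : ℕ → K := fun j => if j ≤ k then G (k - j) else 0 with hgdef
    have hgk : g k = a (k+1) := by simp [hgdef, hGdef]
    have hgtop : ∀ j, k < j → g j = 0 := by
      intro j hj; simp [hgdef, Nat.not_le.mpr hj]
    have hgrec : ∀ j, j < k → g j = a (j+1) + g (j+1) * u ^ ((q-1) * q ^ (j+1)) := by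
      intro j hj
      have h1 : k - j = (k - (j+1)) + 1 := by omega
      have h2 : k - (k - (j+1)) = j + 1 := by omega
      have e1 : g j = G (k - j) := by
        simp only [hgdef]; rw [if_pos (Nat.le_of_lt hj)]
      have e2 : g (j+1) = G (k - (j+1)) := by
        simp only [hgdef]; rw [if_pos (Nat.succ_le_of_lt hj)]
      rw [e1, e2, h1, hGsucc, h2]
    have ha' : ∀ j, j ≤ k → a (j+1) = g j - g (j+1) * u ^ ((q-1) * q ^ (j+1)) := by
      intro j hj
      rcases Nat.lt_or_ge j k with h | h
      · rw [hgrec j h]; ring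
      · have hjk : j = k := by omega
        rw [hjk, hgk, hgtop (k+1) (by omega), zero_mul, sub_zero]
    -- expansion of (L x)^{q^j}
    have hL : ∀ (x : K) (j : ℕ),
        (L x) ^ q ^ j = x ^ q ^ (j+1) - u ^ ((q-1) * q ^ j) * x ^ q ^ j := by
      intro x j
      rw [hLapp, hfrob, mul_pow, ← pow_mul, ← pow_mul,
        show q * q ^ j = q ^ (j+1) from by rw [pow_succ, mul_comm]]
    -- the key identity
    have hiden : ∀ x : K,
        ∑ i ∈ Finset.range (k+2), a i * x ^ q ^ i
          = (∑ j ∈ Finset.range (k+1), g j * (L x) ^ q ^ j)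
            + (a 0 + g 0 * u ^ (q-1)) * x := by
      intro x
      set T : ℕ → K := fun j => g j * u ^ ((q-1) * q ^ j) * x ^ q ^ j with hTdef
      have hT0 : T 0 = g 0 * u ^ (q-1) * x := by simp [hTdef]
      have hTk : T (k+1) = 0 := by
        simp [hTdef, hgtop (k+1) (by omega)]
      have hTshift : ∑ j ∈ Finset.range (k+1), T (j+1)
          = (∑ j ∈ Finset.range (k+1), T j) - T 0 := by
        have hs1 := Finset.sum_range_succ' T (k+1)
        have hs2 := Finset.sum_range_succ T (k+1)
        rw [hTk, add_zero] at hs2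
        rw [hs2] at hs1
        exact eq_sub_of_add_eq hs1.symm
      have hRHS : ∑ j ∈ Finset.range (k+1), g j * (L x) ^ q ^ j
          = (∑ j ∈ Finset.range (k+1), g j * x ^ q ^ (j+1))
            - ∑ j ∈ Finset.range (k+1), T j := by
        rw [← Finset.sum_sub_distrib]
        refine Finset.sum_congr rfl fun j _ => ?_
        rw [hL x j, hTdef]; ring
      have hLHS : ∑ i ∈ Finset.range (k+2), a i * x ^ q ^ i
          = ((∑ j ∈ Finset.range (k+1), g j * x ^ q ^ (j+1))
            - ∑ j ∈ Finset.range (k+1), T (j+1)) + a 0 * x := by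
        rw [Finset.sum_range_succ' (fun i => a i * x ^ q ^ i) (k+1)]
        congr 1
        · rw [← Finset.sum_sub_distrib]
          refine Finset.sum_congr rfl fun j hj => ?_
          rw [ha' j (Nat.lt_succ_iff.mp (Finset.mem_range.mp hj)), hTdef]
          ring
        · simp
      rw [hLHS, hRHS, hTshift, hT0]
      ring
    -- f(u) = 0 forces the linear coefficient to vanish
    have hLu : L u = 0 := by
      rw [hLapp, hupow, sub_self]
    have hc0 : a 0 + g 0 * u ^ (q-1) = 0 := by
      have h := hiden u
      rw [hvan u hmem0, hLu] at h
      have hz : ∑ j ∈ Finset.range (k+1), g j * (0:K) ^ q ^ j = 0 := by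
        apply Finset.sum_eq_zero
        intro j _
        rw [zero_pow (hqi0 j), mul_zero]
      rw [hz, zero_add] at h
      rcases mul_eq_zero.mp h.symm with h' | h'
      · exact h'
      · exact absurd h' hu
    -- the new independent family
    set w : Fin k → K := fun j => L (v j.succ) with hwdef
    have hwli : LinearIndependent Fq w := by
      rw [Fintype.linearIndependent_iff]
      intro s hs
      set z := ∑ j : Fin k, s j • v j.succ with hzdef
      have hLz : L z = 0 := by
        rw [hzdef, map_sum]
        simp only [map_smul]
        exact hs
      have hzq : z ^ q = u ^ (q-1) * z := by
        have h := hLz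
        rw [hLapp] at h
        linear_combination h
      by_cases hz0 : z = 0
      · have hli' := hli.comp Fin.succ (Fin.succ_injective k)
        intro j
        refine Fintype.linearIndependent_iff.mp hli' s ?_ j
        rw [← hz0, hzdef]
        rfl
      · have hupne : u ^ (q-1) ≠ 0 := pow_ne_zero _ hu
        have hx : (z * u⁻¹) ^ q = z * u⁻¹ := by
          rw [mul_pow, hzq, inv_pow, hupow]
          field_simp
        obtain ⟨s₀, hs₀⟩ := fixed_pt q hq h0 (z * u⁻¹) hx
        have hzu : z = s₀ • u := by
          rw [Algebra.smul_def, hs₀]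
          field_simp
        have hcomb : ∑ i : Fin (k+1),
            (Fin.cons s₀ (fun j => -(s j)) : Fin (k+1) → Fq) i • v i = 0 := by
          rw [Fin.sum_univ_succ]
          simp only [Fin.cons_zero, Fin.cons_succ, neg_smul]
          have hns : ∑ i : Fin k, -(s i • v i.succ) = -z := by
            rw [hzdef, ← Finset.sum_neg_distrib]
          rw [hns, ← hu_def, ← hzu]
          simp
        have hall := Fintype.linearIndependent_iff.mp hli _ hcomb
        intro j
        have := hall j.succ
        simpa using this
    -- g vanishes on the span of w
    have hwvan : ∀ y ∈ Submodule.span Fq (Set.range w),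
        ∑ i ∈ Finset.range (k+1), g i * y ^ q ^ i = 0 := by
      intro y hy
      have hrange : Set.range w = L '' Set.range (v ∘ Fin.succ) := by
        rw [hwdef]
        ext y'
        simp [Set.mem_image, Function.comp]
      rw [hrange, ← Submodule.map_span] at hy
      obtain ⟨x, hxmem, rfl⟩ := Submodule.mem_map.mp hy
      have hxmem' : x ∈ Submodule.span Fq (Set.range v) := by
        refine Submodule.span_mono ?_ hxmem
        rintro _ ⟨j, rfl⟩
        exact ⟨j.succ, rfl⟩
      have h := hiden x
      rw [hvan x hxmem', hc0, zero_mul, add_zero] at h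
      exact h.symm
    -- apply the induction hypothesis
    have hIH := IH g (by rw [hgk]; exact hak) w hwli hwvan
    have ha0 : a 0 = -(g 0 * u ^ (q-1)) := by linear_combination hc0
    have hue : (u ^ (q-1)) ^ e = 1 := by
      rw [← pow_mul, mul_comm (q-1) e, he]
      exact FiniteField.pow_card_sub_one_eq_one u hu
    calc a 0 ^ e = (-(g 0 * u ^ (q-1))) ^ e := by rw [ha0]
      _ = (g 0 * u ^ (q-1)) ^ e := heven.neg_pow _
      _ = g 0 ^ e * (u ^ (q-1)) ^ e := mul_pow _ _ _
      _ = g 0 ^ e := by rw [hue, mul_one]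
      _ = g k ^ e := hIH
      _ = a (k+1) ^ e := by rw [hgk]

end TZAux

theorem stmt_8 (q n k : ℕ) (hq : IsPrimePow q) (hodd : Odd q) (hn : 0 < n)
    (hk0 : 1 ≤ k) (hk : k ≤ 2 * n - 1)
    (Fq Fqn K : Type) [Field Fq] [Field Fqn] [Field K]
    [Fintype Fq] [Fintype Fqn] [Fintype K] [Algebra Fq K] [Algebra Fqn K]
    (h0 : Fintype.card Fq = q) (h1 : Fintype.card Fqn = q ^ n)
    (h2 : Fintype.card K = q ^ (2 * n))
    (γ : K) (hns : ∀ x : K, x ^ q = x → x ^ 2 ≠ γ ^ ((q ^ (2 * n) - 1) / (q - 1)))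
    (c : Fin (2 * n) → K)
    (hc : (∃ a : Fqn, c ⟨0, by omega⟩ = algebraMap Fqn K a) ∧
          (∃ b : Fqn, c ⟨k, by omega⟩ = γ * algebraMap Fqn K b) ∧
          ∀ i : Fin (2 * n), k < (i : ℕ) → c i = 0)
    (hc0 : c ≠ 0)
    (v : Fin k → K)
    (hv : ∀ j, ∑ i : Fin (2 * n), c i * v j ^ q ^ (i : ℕ) = 0) :
    ¬ LinearIndependent Fq v := by
  classical
  intro hli
  have hq2 : 2 ≤ q := hq.two_le
  obtain ⟨p, sp, hp', hsp, hpq⟩ := hq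
  have hp : Nat.Prime p := Nat.prime_iff.mpr hp'
  haveI hpfact : Fact p.Prime := ⟨hp⟩
  have hcastK : ((p : K)) ^ (sp * (2*n)) = 0 := by
    have h := Nat.cast_card_eq_zero K
    rw [h2, ← hpq, ← pow_mul] at h
    exact_mod_cast h
  have hpK : (p : K) = 0 :=
    (pow_eq_zero_iff (by positivity : sp * (2*n) ≠ 0)).mp hcastK
  haveI hcharK : CharP K p := (CharP.charP_iff_prime_eq_zero hp).mpr hpK
  have hfrob : ∀ (x y : K) (i : ℕ), (x - y) ^ q ^ i = x ^ q ^ i - y ^ q ^ i := by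
    intro x y i
    rw [← hpq, ← pow_mul]
    exact sub_pow_char_pow x y (sp * i)
  have haddK : ∀ (x y : K) (i : ℕ), (x + y) ^ q ^ i = x ^ q ^ i + y ^ q ^ i := by
    intro x y i
    rw [← hpq, ← pow_mul]
    exact add_pow_char_pow x y p (sp*i)
  have hYcard : ∀ y : K, y ^ q ^ (2*n) = y := fun y => by
    rw [← h2]; exact FiniteField.pow_card y
  -- the exponent E
  set E := (q ^ (2*n) - 1) / (q - 1) with hEdef
  have hgeo := TZAux.geom_mul q hq2 (2*n)
  have hdvd : (q - 1) ∣ q ^ (2*n) - 1 := ⟨_, hgeo.symm⟩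
  have hE : E * (q - 1) = q ^ (2*n) - 1 := Nat.div_mul_cancel hdvd
  have hEsum : E = ∑ i ∈ Finset.range (2*n), q ^ i := by
    refine Nat.eq_of_mul_eq_mul_left (show 0 < q - 1 by omega) ?_
    rw [Nat.mul_div_cancel' hdvd, hgeo]
  have hEeven : Even E := by
    rw [Nat.even_iff, hEsum, Finset.sum_nat_mod]
    have hone : ∀ i ∈ Finset.range (2*n), q ^ i % 2 = 1 :=
      fun i _ => Nat.odd_iff.mp hodd.pow
    rw [Finset.sum_congr rfl hone, Finset.sum_const, Finset.card_range, smul_eq_mul, mul_one]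
    omega
  have hq2n2 : 2 ≤ q ^ (2*n) := le_trans hq2 (Nat.le_self_pow (by omega) q)
  have hE0 : E ≠ 0 := by
    intro h
    rw [h, zero_mul] at hE
    omega
  have hγ : γ ≠ 0 := by
    intro h
    exact hns 0 (by rw [zero_pow (by omega : q ≠ 0)])
      (by rw [h, zero_pow hE0, zero_pow (by omega : (2:ℕ) ≠ 0)])
  -- the q-polynomial map is Fq-linear
  have hsqK : ∀ t : Fq, (algebraMap Fq K t) ^ q = algebraMap Fq K t := fun t => by
    rw [← map_pow]; congr 1; rw [← h0]; exact FiniteField.pow_card t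
  set fm : K →ₗ[Fq] K :=
    { toFun := fun x => ∑ i : Fin (2*n), c i * x ^ q ^ (i : ℕ)
      map_add' := by
        intro x y
        show ∑ i : Fin (2*n), c i * (x+y) ^ q ^ (i:ℕ)
          = (∑ i : Fin (2*n), c i * x ^ q ^ (i:ℕ)) + ∑ i : Fin (2*n), c i * y ^ q ^ (i:ℕ)
        rw [← Finset.sum_add_distrib]
        refine Finset.sum_congr rfl fun i _ => ?_
        rw [haddK]; ring
      map_smul' := by
        intro s x
        show ∑ i : Fin (2*n), c i * (s • x) ^ q ^ (i:ℕ)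
          = s • ∑ i : Fin (2*n), c i * x ^ q ^ (i:ℕ)
        rw [Finset.smul_sum]
        refine Finset.sum_congr rfl fun i _ => ?_
        rw [Algebra.smul_def, Algebra.smul_def, mul_pow,
          TZAux.pow_pow_fix q _ (hsqK s)]
        ring } with hfmdef
  have hspan : ∀ x ∈ Submodule.span Fq (Set.range v),
      ∑ i : Fin (2*n), c i * x ^ q ^ (i:ℕ) = 0 := by
    intro x hx
    have hle : Submodule.span Fq (Set.range v) ≤ LinearMap.ker fm := by
      rw [Submodule.span_le]
      rintro _ ⟨j, rfl⟩
      exact hv j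
    exact hle hx
  -- coefficients as a function on ℕ
  set d : ℕ → K := fun i => if h : i < 2*n then c ⟨i, h⟩ else 0 with hddef
  have hk2n : k < 2*n := by omega
  have hdsum : ∀ x : K,
      ∑ i ∈ Finset.range (2*n), d i * x ^ q ^ i
        = ∑ i : Fin (2*n), c i * x ^ q ^ (i:ℕ) := by
    intro x
    rw [← Fin.sum_univ_eq_sum_range (fun i => d i * x ^ q ^ i) (2*n)]
    refine Finset.sum_congr rfl fun i _ => ?_
    simp [hddef, i.isLt]
  have hdhi : ∀ i : ℕ, k < i → d i = 0 := by
    intro i hi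
    by_cases h : i < 2*n
    · simp only [hddef, dif_pos h]
      exact hc.2.2 ⟨i, h⟩ hi
    · simp [hddef, h]
  obtain ⟨⟨a, ha⟩, ⟨b, hb⟩, hup⟩ := hc
  have hd0 : d 0 = algebraMap Fqn K a := by
    simp only [hddef, dif_pos (by omega : 0 < 2*n)]
    exact ha
  have hdk : d k = γ * algebraMap Fqn K b := by
    simp only [hddef, dif_pos hk2n]
    exact hb
  have hvan2n : ∀ x ∈ Submodule.span Fq (Set.range v),
      ∑ i ∈ Finset.range (2*n), d i * x ^ q ^ i = 0 :=
    fun x hx => by rw [hdsum]; exact hspan x hx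
  by_cases hD0 : d 0 = 0
  · -- low coefficients vanish: shift down, contradiction with root count
    have hex : ∃ i, d i ≠ 0 := by
      by_contra hno
      push_neg at hno
      apply hc0
      funext i
      have h := hno i.1
      simp only [hddef, dif_pos i.isLt] at h
      simpa using h
    set sm := Nat.find hex with hsmdef
    have hsm : d sm ≠ 0 := Nat.find_spec hex
    have hsmmin : ∀ j, j < sm → d j = 0 := fun j hj =>
      not_not.mp (Nat.find_min hex hj)
    have hsm1 : 1 ≤ sm := by
      rcases Nat.eq_zero_or_pos sm with h | h
      · exact absurd (h ▸ hsm) (by simp [hD0])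
      · exact h
    have hsmk : sm ≤ k := by
      by_contra h
      exact hsm (hdhi sm (by omega))
    set d' : ℕ → K := fun i => (d (i + sm)) ^ (q ^ (2*n - sm)) with hd'def
    have hroots : ∀ x ∈ Submodule.span Fq (Set.range v),
        ∑ i ∈ Finset.range (k - sm + 1), d' i * x ^ q ^ i = 0 := by
      intro x hx
      have hqsm0 : (q : ℕ) ^ sm ≠ 0 := pow_ne_zero sm (by omega)
      have hpow : (∑ i ∈ Finset.range (k - sm + 1), d' i * x ^ q ^ i) ^ q ^ sm = 0 := by
        have hsumpow : ∀ (F : ℕ → K) (t : Finset ℕ),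
            (∑ i ∈ t, F i) ^ q ^ sm = ∑ i ∈ t, (F i) ^ q ^ sm := by
          intro F t
          induction t using Finset.induction_on with
          | empty => simp [zero_pow hqsm0]
          | insert _ _ hnotmem ih =>
            rw [Finset.sum_insert hnotmem, Finset.sum_insert hnotmem, haddK, ih]
        rw [hsumpow]
        have hterm : ∀ i ∈ Finset.range (k - sm + 1),
            (d' i * x ^ q ^ i) ^ q ^ sm = d (i + sm) * x ^ q ^ (i + sm) := by
          intro i _
          simp only [hd'def]
          rw [mul_pow, ← pow_mul, ← pow_mul, ← pow_add, ← pow_add,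
            show 2*n - sm + sm = 2*n from by omega, hYcard (d (i+sm))]
        rw [Finset.sum_congr rfl hterm]
        have hreidx : ∑ j ∈ Finset.Ico sm (k+1), d j * x ^ q ^ j
            = ∑ i ∈ Finset.range (k - sm + 1), d (i + sm) * x ^ q ^ (i + sm) := by
          rw [Finset.sum_Ico_eq_sum_range,
            show k + 1 - sm = k - sm + 1 from by omega]
          exact Finset.sum_congr rfl fun i _ => by rw [add_comm sm i]
        have hext : ∑ j ∈ Finset.Ico sm (k+1), d j * x ^ q ^ j
            = ∑ j ∈ Finset.range (2*n), d j * x ^ q ^ j := by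
          apply Finset.sum_subset
          · intro j hj
            simp only [Finset.mem_Ico] at hj
            simp only [Finset.mem_range]
            omega
          · intro j _ hnot
            simp only [Finset.mem_Ico, not_and, not_lt] at hnot
            rcases Nat.lt_or_ge j sm with h | h
            · rw [hsmmin j h, zero_mul]
            · have hj2 := hnot h
              rw [hdhi j (by omega), zero_mul]
        rw [← hreidx, hext]
        exact hvan2n x hx
      exact (pow_eq_zero_iff hqsm0).mp hpow
    have hbound := TZAux.rank_bound (Fq := Fq) (K := K) q hq2 h0 (k - sm) k d' 0
      (by omega)
      (by simp only [hd'def, zero_add]; exact pow_ne_zero _ hsm)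
      v hli hroots
    omega
  · by_cases hDk : d k = 0
    · -- top coefficient vanishes: degree drop, contradiction with root count
      have hroots : ∀ x ∈ Submodule.span Fq (Set.range v),
          ∑ i ∈ Finset.range (k - 1 + 1), d i * x ^ q ^ i = 0 := by
        intro x hx
        have hext : ∑ j ∈ Finset.range k, d j * x ^ q ^ j
            = ∑ j ∈ Finset.range (2*n), d j * x ^ q ^ j := by
          apply Finset.sum_subset
          · intro j hj
            simp only [Finset.mem_range] at hj ⊢
            omega
          · intro j _ hnot
            simp only [Finset.mem_range, not_lt] at hnot
            rcases eq_or_lt_of_le hnot with h | h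
            · rw [← h, hDk, zero_mul]
            · rw [hdhi j h, zero_mul]
        rw [show k - 1 + 1 = k from by omega, hext]
        exact hvan2n x hx
      have hbound := TZAux.rank_bound (Fq := Fq) (K := K) q hq2 h0 (k - 1) k d 0
        (by omega) hD0 v hli hroots
      omega
    · -- main case: apply the Gow–Quinlan norm identity
      have hvanK : ∀ x ∈ Submodule.span Fq (Set.range v),
          ∑ i ∈ Finset.range (k+1), d i * x ^ q ^ i = 0 := by
        intro x hx
        have hext : ∑ j ∈ Finset.range (k+1), d j * x ^ q ^ j
            = ∑ j ∈ Finset.range (2*n), d j * x ^ q ^ j := by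
          apply Finset.sum_subset
          · intro j hj
            simp only [Finset.mem_range] at hj ⊢
            omega
          · intro j _ hnot
            simp only [Finset.mem_range, not_lt] at hnot
            rw [hdhi j (by omega), zero_mul]
        rw [hext]
        exact hvan2n x hx
      have hmain := TZAux.gq q hq2 h0 hfrob E (by rw [h2]; exact hE) hEeven
        k d hDk v hli hvanK
      set A := algebraMap Fqn K a with hA
      set B := algebraMap Fqn K b with hB
      have hA0 : A ≠ 0 := by rw [← hd0]; exact hD0
      have hB0 : B ≠ 0 := by
        intro h
        apply hDk
        rw [hdk, h, mul_zero]
      set E' := ∑ i ∈ Finset.range n, q ^ i with hE'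
      have hE'mul : (q - 1) * E' = q ^ n - 1 := TZAux.geom_mul q hq2 n
      have hqn1 : 1 ≤ q ^ n := Nat.one_le_pow _ _ (by omega)
      have hEfact : E = E' * (q ^ n + 1) := by
        refine Nat.eq_of_mul_eq_mul_left (show 0 < q - 1 by omega) ?_
        calc (q-1) * E = E * (q-1) := mul_comm _ _
          _ = q ^ (2*n) - 1 := hE
          _ = (q ^ n - 1) * (q ^ n + 1) := by
              have h2n : q ^ (2*n) = q ^ n * q ^ n := by rw [two_mul, pow_add]
              obtain ⟨m, hm⟩ := Nat.exists_eq_add_of_le hqn1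
              rw [h2n, hm, show 1 + m - 1 = m from by omega]
              have hmm : (1+m)*(1+m) = m*(1+m+1) + 1 := by ring
              omega
          _ = ((q-1) * E') * (q ^ n + 1) := by rw [hE'mul]
          _ = (q-1) * (E' * (q ^ n + 1)) := by ring
      have hAq : A ^ q ^ n = A := by
        rw [hA, ← map_pow]; congr 1; rw [← h1]; exact FiniteField.pow_card a
      have hBq : B ^ q ^ n = B := by
        rw [hB, ← map_pow]; congr 1; rw [← h1]; exact FiniteField.pow_card b
      have key : ∀ C : K, C ≠ 0 → C ^ q ^ n = C →
          (C ^ E') ^ q = C ^ E' ∧ C ^ E = (C ^ E') ^ 2 := by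
        intro C hC0 hCq
        have h1' : (C ^ E') ^ (q - 1) = 1 := by
          rw [← pow_mul, mul_comm E' (q-1), hE'mul]
          have hmm : C ^ (q ^ n - 1) * C = 1 * C := by
            rw [← pow_succ, show q ^ n - 1 + 1 = q ^ n from by omega, hCq, one_mul]
          exact mul_right_cancel₀ hC0 hmm
        have htq : (C ^ E') ^ q = C ^ E' := by
          calc (C ^ E') ^ q = (C ^ E') ^ (q - 1) * (C ^ E') := by
                rw [← pow_succ]; congr 1; omega
            _ = C ^ E' := by rw [h1', one_mul]
        refine ⟨htq, ?_⟩
        rw [hEfact, pow_mul, pow_succ, TZAux.pow_pow_fix q (C ^ E') htq n, sq]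
      obtain ⟨htAq, hAE⟩ := key A hA0 hAq
      obtain ⟨htBq, hBE⟩ := key B hB0 hBq
      rw [hd0, hdk] at hmain
      have hBE0 : B ^ E' ≠ 0 := pow_ne_zero _ hB0
      refine hns (A ^ E' * (B ^ E')⁻¹)
        (by rw [mul_pow, htAq, inv_pow, htBq]) ?_
      calc (A ^ E' * (B ^ E')⁻¹) ^ 2 = (A ^ E') ^ 2 * ((B ^ E') ^ 2)⁻¹ := by
            rw [mul_pow, inv_pow]
        _ = A ^ E * (B ^ E)⁻¹ := by rw [← hAE, ← hBE]
        _ = γ ^ E * B ^ E * (B ^ E)⁻¹ := by rw [hmain, mul_pow]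
        _ = γ ^ E := by
            rw [mul_assoc, mul_inv_cancel₀ (pow_ne_zero _ hB0), mul_one]
end

section
/- Let q be an odd prime power, n, k positive integers, γ ∈ F_{q^{2n}} with non-square norm over F_q, and ξ ∈ F_{q^{2n}} nonzero with Tr_{q^{2n}/q^n}(γξ) = 0. Then for every f(x) = a x + Σ_{i=1}^{k-1} f_i x^{q^i} + γ b x^{q^k} with a, b ∈ F_{q^n}, f_i ∈ F_{q^{2n}}, and every g(x) = ξγ b̃ x + ξ ã x^{q^k} + Σ_{i=k+1}^{2n-1} ξ g̃_i x^{q^i} with ã, b̃ ∈ F_{q^n}, g̃_i ∈ F_{q^{2n}}, one has Tr_{q^{2n}/q}(Σ_i f_i g_i) = 0, where f_i, g_i denote the coefficients of x^{q^i} in f and g. -/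
theorem stmt_9 (q n k : ℕ) (hq : IsPrimePow q) (hodd : Odd q) (hn : 0 < n)
    (hk0 : 0 < k) (hk : k < 2 * n)
    (Fqn K : Type) [Field Fqn] [Field K] [Fintype Fqn] [Fintype K] [Algebra Fqn K]
    (h1 : Fintype.card Fqn = q ^ n) (h2 : Fintype.card K = q ^ (2 * n))
    (γ ξ : K)
    (hns : ∀ x : K, x ^ q = x → x ^ 2 ≠ γ ^ ((q ^ (2 * n) - 1) / (q - 1)))
    (hξ : ξ ≠ 0) (htr : γ * ξ + (γ * ξ) ^ q ^ n = 0)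
    (a b ta tb : Fqn)
    (fc gc : Fin (2 * n) → K)
    (hf0 : fc ⟨0, by omega⟩ = algebraMap Fqn K a)
    (hfk : fc ⟨k, hk⟩ = γ * algebraMap Fqn K b)
    (hfhigh : ∀ i : Fin (2 * n), k < (i : ℕ) → fc i = 0)
    (hg0 : gc ⟨0, by omega⟩ = ξ * γ * algebraMap Fqn K tb)
    (hgk : gc ⟨k, hk⟩ = ξ * algebraMap Fqn K ta)
    (hglow : ∀ i : Fin (2 * n), 0 < (i : ℕ) → (i : ℕ) < k → gc i = 0) :
    ∑ i ∈ Finset.range (2 * n), (∑ j : Fin (2 * n), fc j * gc j) ^ q ^ i = 0 := by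
  have hne : (⟨0, by omega⟩ : Fin (2 * n)) ≠ ⟨k, hk⟩ := by
    simp only [ne_eq, Fin.mk.injEq]; omega
  have hS : (∑ j : Fin (2 * n), fc j * gc j)
      = γ * ξ * algebraMap Fqn K (a * tb + b * ta) := by
    have : ∑ j : Fin (2 * n), fc j * gc j
        = ∑ j ∈ ({⟨0, by omega⟩, ⟨k, hk⟩} : Finset (Fin (2 * n))), fc j * gc j := by
      refine (Finset.sum_subset (Finset.subset_univ _) ?_).symm
      intro c _ hc
      simp only [Finset.mem_insert, Finset.mem_singleton] at hc
      push_neg at hc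
      obtain ⟨hc0, hck⟩ := hc
      rcases lt_or_ge (c : ℕ) k with h | h
      · have h0 : 0 < (c : ℕ) := by
          rcases Nat.eq_zero_or_pos (c : ℕ) with h0 | h0
          · exact absurd (Fin.ext h0) hc0
          · exact h0
        rw [hglow c h0 h, mul_zero]
      · have hlt : k < (c : ℕ) := by
          rcases lt_or_eq_of_le h with h' | h'
          · exact h'
          · exact absurd (Fin.ext h'.symm) hck
        rw [hfhigh c hlt, zero_mul]
    rw [this, Finset.sum_pair hne, hf0, hfk, hg0, hgk, map_add, map_mul, map_mul]
    ring
  have hc : (algebraMap Fqn K (a * tb + b * ta)) ^ q ^ n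
      = algebraMap Fqn K (a * tb + b * ta) := by
    rw [← map_pow, ← h1, FiniteField.pow_card]
  set S := γ * ξ * algebraMap Fqn K (a * tb + b * ta) with hSdef
  have hSn : S ^ q ^ n = -S := by
    have hγξ : (γ * ξ) ^ q ^ n = -(γ * ξ) := by linear_combination htr
    rw [hSdef, mul_pow, hγξ, hc]; ring
  have key : ∀ i, S ^ q ^ (n + i) = -(S ^ q ^ i) := by
    intro i
    rw [pow_add, pow_mul, hSn, Odd.neg_pow (hodd.pow)]
  rw [hS, two_mul, Finset.sum_range_add]
  simp [key]
end

section
/- Let λ_0, ..., λ_{2n−1} be an F_q-basis of F_{q^{2n}} and let ξ ∈ F_{q^{2n}} be nonzero. Then there exists a unique vector μ = (μ_0, ..., μ_{2n−1}) ∈ F_{q^{2n}}^{2n} such that Σ_{s=0}^{2n−1} λ_s μ_s = ξ^{q^{2n−k}} and Σ_{s=0}^{2n−1} λ_s^{q^h} μ_s = 0 for all h ∈ {1, ..., 2n−1}; moreover μ_0, ..., μ_{2n−1} form an F_q-basis of F_{q^{2n}}, and Σ_{s=0}^{2n−1} λ_s^{q^i} μ_s^{q^j} = 0 whenever i ≢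 j (mod 2n). -/
theorem stmt_10 (q n k : ℕ) (hq : IsPrimePow q) (hn : 0 < n) (hk : k < 2 * n)
    (Fq K : Type) [Field Fq] [Field K] [Fintype Fq] [Fintype K] [Algebra Fq K]
    (h1 : Fintype.card Fq = q) (h2 : Fintype.card K = q ^ (2 * n))
    (lam : Fin (2 * n) → K)
    (hli : LinearIndependent Fq lam)
    (hsp : Submodule.span Fq (Set.range lam) = ⊤)
    (ξ : K) (hξ : ξ ≠ 0) :
    (∃! μ : Fin (2 * n) → K,
        (∑ s : Fin (2 * n), lam s * μ s = ξ ^ q ^ (2 * n - k)) ∧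
        ∀ h ∈ Finset.Ico 1 (2 * n), ∑ s : Fin (2 * n), lam s ^ q ^ h * μ s = 0) ∧
    ∀ μ : Fin (2 * n) → K,
      ((∑ s : Fin (2 * n), lam s * μ s = ξ ^ q ^ (2 * n - k)) ∧
        ∀ h ∈ Finset.Ico 1 (2 * n), ∑ s : Fin (2 * n), lam s ^ q ^ h * μ s = 0) →
      (LinearIndependent Fq μ ∧ Submodule.span Fq (Set.range μ) = ⊤ ∧
        ∀ i j : Fin (2 * n), i ≠ j →
          ∑ s : Fin (2 * n), lam s ^ q ^ (i : ℕ) * μ s ^ q ^ (j : ℕ) = 0) := by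
  classical
  obtain ⟨p, m, hpp, hm, hpmq⟩ := hq
  have hp : p.Prime := hpp.nat_prime
  haveI : Fact p.Prime := ⟨hp⟩
  have hq2 : 2 ≤ q := by
    calc 2 ≤ p := hp.two_le
    _ ≤ p ^ m := Nat.le_self_pow hm.ne' p
    _ = q := hpmq
  haveI : NeZero (2 * n) := ⟨by omega⟩
  have hcard : Fintype.card K = p ^ (m * (2 * n)) := by
    rw [h2, ← hpmq, ← pow_mul]
  haveI : CharP K p := by
    obtain ⟨p', hc⟩ := CharP.exists K
    haveI := hc
    have hp' : p'.Prime := CharP.char_is_prime K p'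
    obtain ⟨n', _, hcard'⟩ := FiniteField.card K p'
    have hd : p ∣ p' ^ (n' : ℕ) := by
      rw [← hcard', hcard]
      exact dvd_pow_self p (by positivity)
    have hpe : p = p' := (Nat.prime_dvd_prime_iff_eq hp hp').mp (hp.prime.dvd_of_dvd_pow hd)
    rwa [hpe]
  haveI : ExpChar K p := .prime hp
  have hqp : ∀ e : ℕ, q ^ e = p ^ (m * e) := by
    intro e; rw [← hpmq, ← pow_mul]
  have hpowK : ∀ x : K, x ^ q ^ (2 * n) = x := by
    intro x; rw [← h2]; exact FiniteField.pow_card x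
  have hstep : ∀ (t r : ℕ) (x : K), x ^ q ^ (2 * n * t + r) = x ^ q ^ r := by
    intro t
    induction t with
    | zero => simp
    | succ t ih =>
      intro r x
      have he : 2 * n * (t + 1) + r = 2 * n + (2 * n * t + r) := by ring
      rw [he, pow_add, pow_mul, hpowK, ih]
  have hmod : ∀ (a : ℕ) (x : K), x ^ q ^ a = x ^ q ^ (a % (2 * n)) := by
    intro a x
    conv_lhs => rw [← Nat.div_add_mod a (2 * n)]
    exact hstep _ _ x
  have hsumpow : ∀ (f : Fin (2 * n) → K) (e : ℕ),
      (∑ s, f s) ^ q ^ e = ∑ s, f s ^ q ^ e := by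
    intro f e
    rw [hqp e]
    exact sum_pow_char_pow (p := p) (n := m * e) Finset.univ f
  have hFq : ∀ (a : Fq) (e : ℕ), a ^ q ^ e = a := by
    intro a e; rw [← h1]; exact FiniteField.pow_card_pow e a
  have hsmulpow : ∀ (a : Fq) (x : K) (e : ℕ), (a • x) ^ q ^ e = a • x ^ q ^ e := by
    intro a x e
    rw [Algebra.smul_def, Algebra.smul_def, mul_pow, ← map_pow, hFq]
  set c : K := ξ ^ q ^ (2 * n - k) with hcdef
  have hc0 : c ≠ 0 := pow_ne_zero _ hξ
  set M : Matrix (Fin (2 * n)) (Fin (2 * n)) K :=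
    Matrix.of fun h s => lam s ^ q ^ (h : ℕ) with hM
  set v : Fin (2 * n) → K := fun h => if h = 0 then c else 0 with hv
  -- the Moore matrix is invertible
  have hMdet : M.det ≠ 0 := by
    intro hdet
    obtain ⟨cv, hcv0, hcvM⟩ := Matrix.exists_vecMul_eq_zero_iff.mpr hdet
    have hlam0 : ∀ s, ∑ h : Fin (2 * n), cv h * lam s ^ q ^ (h : ℕ) = 0 := by
      intro s
      have := congrFun hcvM s
      simpa [Matrix.vecMul, dotProduct, hM] using this
    have hall : ∀ x : K, ∑ h : Fin (2 * n), cv h * x ^ q ^ (h : ℕ) = 0 := by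
      let S : Submodule Fq K :=
        { carrier := {x | ∑ h : Fin (2 * n), cv h * x ^ q ^ (h : ℕ) = 0}
          add_mem' := by
            intro x y hx hy
            simp only [Set.mem_setOf_eq] at *
            have hadd : ∀ h : Fin (2 * n),
                (x + y) ^ q ^ (h : ℕ) = x ^ q ^ (h : ℕ) + y ^ q ^ (h : ℕ) := by
              intro h; rw [hqp]; exact add_pow_expChar_pow (p := p) x y (m * (h : ℕ))
            simp only [hadd, mul_add, Finset.sum_add_distrib, hx, hy, add_zero]
          zero_mem' := by
            have : ∀ h : Fin (2 * n), (0 : K) ^ q ^ (h : ℕ) = 0 := by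
              intro h; exact zero_pow (by positivity : 0 < q ^ (h : ℕ)).ne'
            simp [this]
          smul_mem' := by
            intro a x hx
            simp only [Set.mem_setOf_eq] at *
            simp only [hsmulpow, mul_smul_comm, ← Finset.smul_sum, hx, smul_zero]
        }
      intro x
      have hle : (⊤ : Submodule Fq K) ≤ S := by
        rw [← hsp]
        refine Submodule.span_le.mpr ?_
        rintro _ ⟨s, rfl⟩
        exact hlam0 s
      exact hle trivial
    have hinj : Function.Injective
        (fun h : Fin (2 * n) => (powMonoidHom (q ^ (h : ℕ)) : K →* K)) := by
      intro a b hab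
      obtain ⟨g, hg⟩ := IsCyclic.exists_generator (α := Kˣ)
      have horder : orderOf g = q ^ (2 * n) - 1 := by
        rw [orderOf_eq_card_of_forall_mem_zpowers hg, Nat.card_eq_fintype_card, Fintype.card_units, h2]
      have hgp : g ^ q ^ (a : ℕ) = g ^ q ^ (b : ℕ) := by
        have h' := congrArg (fun f : K →* K => f (g : K)) hab
        simp only [powMonoidHom_apply] at h'
        exact Units.ext (by rw [Units.val_pow_eq_pow_val, Units.val_pow_eq_pow_val]; exact h')
      have hmodq := pow_eq_pow_iff_modEq.mp hgp
      rw [horder] at hmodq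
      have hbound : ∀ h : Fin (2 * n), q ^ (h : ℕ) < q ^ (2 * n) - 1 := by
        intro h
        have hb1 : q ^ (h : ℕ) ≤ q ^ (2 * n - 1) :=
          Nat.pow_le_pow_right (by omega) (by omega)
        have hb2 : 2 * q ^ (2 * n - 1) ≤ q ^ (2 * n) := by
          calc 2 * q ^ (2 * n - 1) ≤ q * q ^ (2 * n - 1) := Nat.mul_le_mul_right _ hq2
          _ = q ^ (2 * n) := by rw [← pow_succ']; congr 1; omega
        have hb3 : 2 ≤ q ^ (2 * n - 1) := le_trans hq2 (Nat.le_self_pow (by omega) q)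
        omega
      have hpq : q ^ (a : ℕ) = q ^ (b : ℕ) := by
        unfold Nat.ModEq at hmodq
        rwa [Nat.mod_eq_of_lt (hbound a), Nat.mod_eq_of_lt (hbound b)] at hmodq
      exact Fin.ext (Nat.pow_right_injective hq2 hpq)
    have hliM := (linearIndependent_monoidHom K K).comp _ hinj
    have hzero : ∀ i, cv i = 0 := by
      refine Fintype.linearIndependent_iff.mp hliM cv ?_
      funext x
      simpa [Finset.sum_apply, powMonoidHom_apply, smul_eq_mul] using hall x
    exact hcv0 (funext hzero)
  -- system reformulation
  have hkey : ∀ μ : Fin (2 * n) → K,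
      ((∑ s : Fin (2 * n), lam s * μ s = c) ∧
        ∀ h ∈ Finset.Ico 1 (2 * n), ∑ s : Fin (2 * n), lam s ^ q ^ h * μ s = 0)
        ↔ M.mulVec μ = v := by
    intro μ
    constructor
    · rintro ⟨he0, he1⟩
      funext h
      by_cases h0 : h = 0
      · subst h0
        simp only [Matrix.mulVec, dotProduct, hM, Matrix.of_apply, hv, if_pos rfl]
        simpa using he0
      · have hmem : (h : ℕ) ∈ Finset.Ico 1 (2 * n) := by
          rw [Finset.mem_Ico]
          have : (h : ℕ) ≠ 0 := by
            intro hz; exact h0 (Fin.ext (by simp [hz]))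
          exact ⟨by omega, h.isLt⟩
        simp only [Matrix.mulVec, dotProduct, hM, Matrix.of_apply, hv, if_neg h0]
        exact he1 _ hmem
    · intro hMv
      constructor
      · have := congrFun hMv 0
        simp only [Matrix.mulVec, dotProduct, hM, Matrix.of_apply, hv, if_pos rfl] at this
        simpa using this
      · intro h hmem
        rw [Finset.mem_Ico] at hmem
        have hne : (⟨h, hmem.2⟩ : Fin (2 * n)) ≠ 0 := by
          intro hcontra
          have := congrArg Fin.val hcontra
          simp only [Fin.val_zero] at this
          omega
        have := congrFun hMv ⟨h, hmem.2⟩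
        simp only [Matrix.mulVec, dotProduct, hM, Matrix.of_apply, hv, if_neg hne] at this
        exact this
  have hMunit : IsUnit M.det := isUnit_iff_ne_zero.mpr hMdet
  constructor
  · refine ⟨M⁻¹.mulVec v, (hkey _).mpr ?_, ?_⟩
    · rw [Matrix.mulVec_mulVec, Matrix.mul_nonsing_inv _ hMunit, Matrix.one_mulVec]
    · intro μ hμ
      rw [hkey] at hμ
      calc μ = M⁻¹.mulVec (M.mulVec μ) := by
              rw [Matrix.mulVec_mulVec, Matrix.nonsing_inv_mul _ hMunit, Matrix.one_mulVec]
      _ = M⁻¹.mulVec v := by rw [hμ]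
  · intro μ hμ
    rw [hkey] at hμ
    have hA : ∀ i j : Fin (2 * n),
        ∑ s : Fin (2 * n), lam s ^ q ^ (i : ℕ) * μ s ^ q ^ (j : ℕ)
          = if i = j then c ^ q ^ (j : ℕ) else 0 := by
      intro i j
      have ha2 : ((i : ℕ) + 2 * n - (j : ℕ)) % (2 * n) < 2 * n := Nat.mod_lt _ (by omega)
      set a : ℕ := ((i : ℕ) + 2 * n - (j : ℕ)) % (2 * n) with ha
      have heq := congrFun hμ ⟨a, ha2⟩
      simp only [Matrix.mulVec, dotProduct, hM, Matrix.of_apply] at heq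
      have hpow := congrArg (fun x : K => x ^ q ^ (j : ℕ)) heq
      rw [hsumpow] at hpow
      have hterm : ∀ s, (lam s ^ q ^ a * μ s) ^ q ^ (j : ℕ)
          = lam s ^ q ^ (i : ℕ) * μ s ^ q ^ (j : ℕ) := by
        intro s
        rw [mul_pow, ← pow_mul, ← pow_add]
        congr 1
        have hmm : (a + (j : ℕ)) % (2 * n) = (i : ℕ) % (2 * n) := by
          rw [ha, Nat.mod_add_mod, Nat.sub_add_cancel (by omega), Nat.add_mod_right]
        rw [hmod (a + (j : ℕ)) (lam s), hmod (i : ℕ) (lam s), hmm]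
      simp only [hterm] at hpow
      rw [hpow]
      have hiff : (⟨a, ha2⟩ : Fin (2 * n)) = 0 ↔ i = j := by
        constructor
        · intro h0
          have ha0 : a = 0 := congrArg Fin.val h0
          have hdvd : (2 * n) ∣ ((i : ℕ) + 2 * n - (j : ℕ)) :=
            Nat.dvd_of_mod_eq_zero ha0
          obtain ⟨t, ht⟩ := hdvd
          have hi := i.isLt
          have hj := j.isLt
          have ht1 : t = 1 := by
            rcases t with _ | _ | t
            · omega
            · rfl
            · exfalso
              have hge : 2 * n * (t + 2) = 2 * n * t + 4 * n := by ring
              rw [hge] at ht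
              omega
          subst ht1
          exact Fin.ext (by omega)
        · intro hij
          subst hij
          apply Fin.ext
          show a = 0
          rw [ha]
          have he : (i : ℕ) + 2 * n - (i : ℕ) = 2 * n := by omega
          rw [he, Nat.mod_self]
      simp only [hv]
      by_cases hij : i = j
      · rw [if_pos (hiff.mpr hij), if_pos hij]
      · rw [if_neg (fun h => hij (hiff.mp h)), if_neg hij,
          zero_pow (by positivity : 0 < q ^ (j : ℕ)).ne']
    set N : Matrix (Fin (2 * n)) (Fin (2 * n)) K :=
      Matrix.of fun h s => μ s ^ q ^ (h : ℕ) with hN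
    have hMN : M * N.transpose = Matrix.diagonal (fun j : Fin (2 * n) => c ^ q ^ (j : ℕ)) := by
      ext i j
      rw [Matrix.mul_apply]
      simp only [hM, hN, Matrix.transpose_apply, Matrix.of_apply]
      rw [hA i j, Matrix.diagonal_apply]
      by_cases hij : i = j
      · subst hij; simp
      · simp [hij]
    have hNdet : N.det ≠ 0 := by
      intro h0
      have hdet := congrArg Matrix.det hMN
      rw [Matrix.det_mul, Matrix.det_transpose, h0, mul_zero, Matrix.det_diagonal] at hdet
      exact (Finset.prod_ne_zero_iff.mpr (fun j _ => pow_ne_zero _ hc0)) hdet.symm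
    have hliμ : LinearIndependent Fq μ := by
      rw [Fintype.linearIndependent_iff]
      intro g hg
      have hvec : N.mulVec (fun s => algebraMap Fq K (g s)) = 0 := by
        funext j
        simp only [Matrix.mulVec, dotProduct, hN, Matrix.of_apply, Pi.zero_apply]
        calc ∑ s : Fin (2 * n), μ s ^ q ^ (j : ℕ) * algebraMap Fq K (g s)
            = ∑ s : Fin (2 * n), (g s • μ s) ^ q ^ (j : ℕ) := by
              refine Finset.sum_congr rfl fun s _ => ?_
              rw [hsmulpow, Algebra.smul_def, mul_comm]
        _ = (∑ s : Fin (2 * n), g s • μ s) ^ q ^ (j : ℕ) := (hsumpow _ _).symm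
        _ = 0 := by rw [hg, zero_pow (by positivity : 0 < q ^ (j : ℕ)).ne']
      have hz := Matrix.eq_zero_of_mulVec_eq_zero hNdet hvec
      intro s
      have := congrFun hz s
      simp only [Pi.zero_apply] at this
      exact (algebraMap Fq K).injective (by simpa using this)
    have hfr : Module.finrank Fq K = 2 * n := by
      have hcc := Module.card_eq_pow_finrank (K := Fq) (V := K)
      rw [h1, h2] at hcc
      exact (Nat.pow_right_injective hq2 hcc.symm)
    have hspan : Submodule.span Fq (Set.range μ) = ⊤ := by
      haveI : Nonempty (Fin (2 * n)) := ⟨0⟩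
      exact hliμ.span_eq_top_of_card_eq_finrank (by rw [Fintype.card_fin, hfr])
    exact ⟨hliμ, hspan, fun i j hij => by rw [hA i j, if_neg hij]⟩
end
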